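/- Let G be a finite connected simple graph on n ≥ 2 vertices with Laplacian matrix L, and let λ_2 be the second-smallest Laplacian eigenvalue. For distinct vertices u and v, the biharmonic distance satisfies d_B(u,v) = √2 / λ_2 if and only if G is isomorphic to the complete graph K_n, or for every eigenvector x of L whose eigenvalue λ satisfies λ > λ_2 one has x(u) = x(v). -/

import Mathlib

open Matrix Finset

/-- Uniqueness of the Moore–Penrose pseudoinverse. -/
lemma penrose_unique {V : Type*} [Fintype V] [DecidableEq V]
    (L A B : Matrix V V ℝ)
    (a1 : L * A * L = L) (a2 : A * L * A = A) (a3 : (L*A)ᵀ = L*A) (a4 : (A*L)ᵀ = A*L)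
    (b1 : L * B * L = L) (b2 : B * L * B = B) (b3 : (L*B)ᵀ = L*B) (b4 : (B*L)ᵀ = B*L) :
    A = B := by
  have hAL : A * L = B * L := by
    calc A * L = A * (L * B * L) := by rw [b1]
      _ = (A * L) * (B * L) := by simp only [Matrix.mul_assoc]
      _ = (A * L)ᵀ * (B * L)ᵀ := by rw [a4, b4]
      _ = ((B * L) * (A * L))ᵀ := (Matrix.transpose_mul _ _).symm
      _ = ((B * (L * A * L)))ᵀ := by simp only [Matrix.mul_assoc]
      _ = (B * L)ᵀ := by rw [a1]
      _ = B * L := b4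
  have hLA : L * A = L * B := by
    calc L * A = (L * B * L) * A := by rw [b1]
      _ = (L * B) * (L * A) := by simp only [Matrix.mul_assoc]
      _ = (L * B)ᵀ * (L * A)ᵀ := by rw [a3, b3]
      _ = ((L * A) * (L * B))ᵀ := (Matrix.transpose_mul _ _).symm
      _ = ((L * A * L) * B)ᵀ := by simp only [Matrix.mul_assoc]
      _ = (L * B)ᵀ := by rw [a1]
      _ = L * B := b3
  calc A = A * L * A := a2.symm
    _ = A * (L * A) := Matrix.mul_assoc _ _ _
    _ = A * (L * B) := by rw [hLA]
    _ = (A * L) * B := (Matrix.mul_assoc _ _ _).symm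
    _ = (B * L) * B := by rw [hAL]
    _ = B := b2

/-- Equality case for the upper bound: for distinct vertices
`u, v` of a connected graph on `n ≥ 2` vertices, `d_B(u,v) = √2 / λ₂` iff `G`
is isomorphic to the complete graph `K_n`, or every eigenvector of the
Laplacian whose eigenvalue exceeds `λ₂` takes the same value at `u` and `v`. -/
theorem biharmonic_distance_eq_sqrt_two_div_lambda_two_iff
    {V : Type*} [Fintype V] [DecidableEq V] {n : ℕ}
    (G : SimpleGraph V) [DecidableRel G.Adj] (hG : G.Connected)
    (hn : Fintype.card V = n) (hn2 : 2 ≤ n)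
    (Lp : Matrix V V ℝ)
    (hp1 : G.lapMatrix ℝ * Lp * G.lapMatrix ℝ = G.lapMatrix ℝ)
    (hp2 : Lp * G.lapMatrix ℝ * Lp = Lp)
    (hp3 : (G.lapMatrix ℝ * Lp)ᵀ = G.lapMatrix ℝ * Lp)
    (hp4 : (Lp * G.lapMatrix ℝ)ᵀ = Lp * G.lapMatrix ℝ)
    (lam : Fin n → ℝ) (z : Fin n → V → ℝ)
    (horth : ∀ i j, ∑ w, z i w * z j w = if i = j then 1 else 0)
    (heig : ∀ k, G.lapMatrix ℝ *ᵥ z k = lam k • z k)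
    (hmono : Monotone lam)
    (h0 : lam ⟨0, by omega⟩ = 0)
    (h2pos : 0 < lam ⟨1, by omega⟩)
    (u v : V) (huv : u ≠ v) :
    Real.sqrt ((Lp * Lp) u u + (Lp * Lp) v v - 2 * (Lp * Lp) u v)
        = Real.sqrt 2 / lam ⟨1, by omega⟩
      ↔ (Nonempty (G ≃g (⊤ : SimpleGraph V))
          ∨ ∀ (μ : ℝ) (x : V → ℝ), x ≠ 0 → G.lapMatrix ℝ *ᵥ x = μ • x →
              lam ⟨1, by omega⟩ < μ → x u = x v) := by
  classical
  set i0 : Fin n := ⟨0, by omega⟩ with hi0def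
  set i1 : Fin n := ⟨1, by omega⟩ with hi1def
  have h0' : lam i0 = 0 := h0
  have h2pos' : 0 < lam i1 := h2pos
  set lm2 : ℝ := lam i1 with hlm2def
  -- completeness of the eigenvector system
  have e : V ≃ Fin n := Fintype.equivFinOfCardEq hn
  have hcomp : ∀ w w' : V, (∑ k, z k w * z k w') = if w = w' then 1 else 0 := by
    set W : Matrix (Fin n) (Fin n) ℝ := Matrix.of (fun i j => z i (e.symm j)) with hW
    have h1 : W * Wᵀ = 1 := by
      ext i j
      simp only [Matrix.mul_apply, Matrix.transpose_apply, hW, Matrix.of_apply, Matrix.one_apply]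
      rw [Equiv.sum_comp e.symm (fun w => z i w * z j w)]
      exact horth i j
    have h2 : Wᵀ * W = 1 := mul_eq_one_comm.mp h1
    intro w w'
    have := congrFun (congrFun h2 (e w)) (e w')
    simp only [Matrix.mul_apply, Matrix.transpose_apply, hW, Matrix.of_apply, Matrix.one_apply,
      Equiv.symm_apply_apply, EmbeddingLike.apply_eq_iff_eq] at this
    exact this
  -- spectral decomposition
  set Z : Matrix (Fin n) V ℝ := Matrix.of z with hZ
  have hZZt : Z * Zᵀ = 1 := by
    ext i j
    simp only [Matrix.mul_apply, Matrix.transpose_apply, hZ, Matrix.of_apply, Matrix.one_apply]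
    exact horth i j
  have hLZ : G.lapMatrix ℝ * Zᵀ = Zᵀ * Matrix.diagonal lam := by
    ext w k
    have := congrFun (heig k) w
    simp only [Matrix.mulVec, dotProduct, Pi.smul_apply, smul_eq_mul] at this
    simp only [Matrix.mul_apply, Matrix.transpose_apply, hZ, Matrix.of_apply,
      Matrix.diagonal_apply]
    rw [Finset.sum_eq_single k (by intro b _ hb; rw [if_neg hb, mul_zero]) (by simp)]
    rw [this]
    simp [mul_comm]
  have hZtZ : Zᵀ * Z = 1 := by
    ext w w'
    simp only [Matrix.mul_apply, Matrix.transpose_apply, hZ, Matrix.of_apply, Matrix.one_apply]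
    exact hcomp w w'
  have hLspec : G.lapMatrix ℝ = Zᵀ * Matrix.diagonal lam * Z := by
    calc G.lapMatrix ℝ = G.lapMatrix ℝ * (Zᵀ * Z) := by rw [hZtZ, Matrix.mul_one]
      _ = (G.lapMatrix ℝ * Zᵀ) * Z := by rw [Matrix.mul_assoc]
      _ = Zᵀ * Matrix.diagonal lam * Z := by rw [hLZ]
  have key : ∀ d d' : Fin n → ℝ,
      (Zᵀ * Matrix.diagonal d * Z) * (Zᵀ * Matrix.diagonal d' * Z)
        = Zᵀ * Matrix.diagonal (fun k => d k * d' k) * Z := by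
    intro d d'
    have h1 : ∀ (A : Matrix V (Fin n) ℝ) (B : Matrix (Fin n) V ℝ),
        (A * Z) * (Zᵀ * B) = A * B := by
      intro A B
      rw [Matrix.mul_assoc, ← Matrix.mul_assoc Z Zᵀ B, hZZt, Matrix.one_mul]
    rw [Matrix.mul_assoc Zᵀ (Matrix.diagonal d') Z, h1, ← Matrix.diagonal_mul_diagonal]
    simp only [Matrix.mul_assoc]
  have hsymm : ∀ d : Fin n → ℝ, (Zᵀ * Matrix.diagonal d * Z)ᵀ = Zᵀ * Matrix.diagonal d * Z := by
    intro d
    rw [Matrix.transpose_mul, Matrix.transpose_mul, Matrix.transpose_transpose,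
      Matrix.diagonal_transpose, Matrix.mul_assoc]
  set M : Matrix V V ℝ := Zᵀ * Matrix.diagonal (fun k => (lam k)⁻¹) * Z with hM
  have hdia : ∀ d d' : Fin n → ℝ, (∀ k, d k = d' k) →
      Zᵀ * Matrix.diagonal d * Z = Zᵀ * Matrix.diagonal d' * Z := by
    intro d d' h
    rw [funext h]
  have hM1 : G.lapMatrix ℝ * M * G.lapMatrix ℝ = G.lapMatrix ℝ := by
    conv_lhs => rw [hLspec, hM, key, key]
    conv_rhs => rw [hLspec]
    refine hdia _ lam fun k => ?_
    show lam k * (lam k)⁻¹ * lam k = lam k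
    rcases eq_or_ne (lam k) 0 with h | h
    · simp [h]
    · field_simp
  have hM2 : M * G.lapMatrix ℝ * M = M := by
    conv_lhs => rw [hM, hLspec, key, key]
    conv_rhs => rw [hM]
    refine hdia _ (fun k => (lam k)⁻¹) fun k => ?_
    show (lam k)⁻¹ * lam k * (lam k)⁻¹ = (lam k)⁻¹
    rcases eq_or_ne (lam k) 0 with h | h
    · simp [h]
    · field_simp
  have hM3 : (G.lapMatrix ℝ * M)ᵀ = G.lapMatrix ℝ * M := by
    rw [hLspec, hM, key, hsymm]
  have hM4 : (M * G.lapMatrix ℝ)ᵀ = M * G.lapMatrix ℝ := by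
    rw [hLspec, hM, key, hsymm]
  have hLpM : Lp = M :=
    penrose_unique (G.lapMatrix ℝ) Lp M hp1 hp2 hp3 hp4 hM1 hM2 hM3 hM4
  have hLpLp : Lp * Lp = Zᵀ * Matrix.diagonal (fun k => (lam k)⁻¹ * (lam k)⁻¹) * Z := by
    rw [hLpM, hM, key]
  have hent : ∀ (d : Fin n → ℝ) (w w' : V),
      (Zᵀ * Matrix.diagonal d * Z) w w' = ∑ k, d k * (z k w * z k w') := by
    intro d w w'
    rw [Matrix.mul_apply]
    refine Finset.sum_congr rfl fun k _ => ?_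
    rw [Matrix.mul_diagonal]
    simp only [Matrix.transpose_apply, hZ, Matrix.of_apply]
    ring
  have hQ : (Lp * Lp) u u + (Lp * Lp) v v - 2 * (Lp * Lp) u v
      = ∑ k, ((lam k)⁻¹ * (lam k)⁻¹) * (z k u - z k v) ^ 2 := by
    rw [hLpLp, hent, hent, hent, ← Finset.sum_add_distrib, Finset.mul_sum,
      ← Finset.sum_sub_distrib]
    exact Finset.sum_congr rfl fun k _ => by ring
  -- basic facts about the eigenvalues/eigenvectors
  have hznz : ∀ k, z k ≠ 0 := by
    intro k h
    have := horth k k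
    simp [h] at this
  have hz0 : z i0 u = z i0 v := by
    have hz : G.lapMatrix ℝ *ᵥ z i0 = 0 := by rw [heig i0, h0', zero_smul]
    exact (SimpleGraph.lapMatrix_mulVec_eq_zero_iff_forall_reachable (G := G)).mp
      hz u v (hG.preconnected u v)
  have hsum2 : ∑ k, (z k u - z k v) ^ 2 = 2 := by
    have h1 : ∑ k, z k u * z k u = 1 := by simpa using hcomp u u
    have h2 : ∑ k, z k v * z k v = 1 := by simpa using hcomp v v
    have h3 : ∑ k, z k u * z k v = 0 := by simpa [huv] using hcomp u v
    calc ∑ k, (z k u - z k v) ^ 2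
        = ∑ k, (z k u * z k u + z k v * z k v - 2 * (z k u * z k v)) :=
          Finset.sum_congr rfl fun k _ => by ring
      _ = 2 := by
          rw [Finset.sum_sub_distrib, Finset.sum_add_distrib, ← Finset.mul_sum, h1, h2, h3]
          norm_num
  have hge : ∀ k, k ≠ i0 → lm2 ≤ lam k := by
    intro k hk
    have hkv : k.val ≠ 0 := fun h => hk (Fin.ext h)
    refine hmono ?_
    rw [Fin.le_def]
    exact Nat.one_le_iff_ne_zero.mpr hkv
  have hinv : ∀ k, 0 ≤ (lam k)⁻¹ ∧ (lam k)⁻¹ ≤ lm2⁻¹ := by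
    intro k
    by_cases hk : k = i0
    · subst hk
      rw [h0']
      simp [inv_nonneg.mpr h2pos'.le]
    · have h := hge k hk
      have hpos : 0 < lam k := lt_of_lt_of_le h2pos' h
      refine ⟨inv_nonneg.mpr hpos.le, ?_⟩
      rw [inv_le_inv₀ hpos h2pos']
      exact h
  -- the core combinatorial condition
  have hQC : (∑ k, ((lam k)⁻¹ * (lam k)⁻¹) * (z k u - z k v) ^ 2 = 2 / lm2 ^ 2)
      ↔ (∀ k : Fin n, lm2 < lam k → z k u = z k v) := by
    set t : Fin n → ℝ := fun k => (z k u - z k v) ^ 2 * (lm2⁻¹ * lm2⁻¹ - (lam k)⁻¹ * (lam k)⁻¹)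
      with ht
    have hδ : 2 / lm2 ^ 2 - (∑ k, ((lam k)⁻¹ * (lam k)⁻¹) * (z k u - z k v) ^ 2) = ∑ k, t k := by
      have h2d : 2 / lm2 ^ 2 = ∑ k, (z k u - z k v) ^ 2 * (lm2⁻¹ * lm2⁻¹) := by
        rw [← Finset.sum_mul, hsum2, div_eq_mul_inv, sq, mul_inv]
      rw [h2d, ← Finset.sum_sub_distrib]
      refine Finset.sum_congr rfl fun k _ => ?_
      show _ = (z k u - z k v) ^ 2 * (lm2⁻¹ * lm2⁻¹ - (lam k)⁻¹ * (lam k)⁻¹)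
      ring
    have htnn : ∀ k ∈ Finset.univ, 0 ≤ t k := by
      intro k _
      show 0 ≤ (z k u - z k v) ^ 2 * (lm2⁻¹ * lm2⁻¹ - (lam k)⁻¹ * (lam k)⁻¹)
      refine mul_nonneg (sq_nonneg _) ?_
      obtain ⟨ha, hb⟩ := hinv k
      nlinarith
    constructor
    · intro hQ2 k hk
      have hzero : ∑ k, t k = 0 := by rw [← hδ, hQ2, sub_self]
      have htk := (Finset.sum_eq_zero_iff_of_nonneg htnn).mp hzero k (Finset.mem_univ k)
      have hposk : 0 < lam k := lt_trans h2pos' hk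
      have hlt : (lam k)⁻¹ < lm2⁻¹ := by
        rw [inv_lt_inv₀ hposk h2pos']
        exact hk
      have hfac : 0 < lm2⁻¹ * lm2⁻¹ - (lam k)⁻¹ * (lam k)⁻¹ := by
        obtain ⟨ha, _⟩ := hinv k
        nlinarith
      have htk' : (z k u - z k v) ^ 2 * (lm2⁻¹ * lm2⁻¹ - (lam k)⁻¹ * (lam k)⁻¹) = 0 := htk
      rcases mul_eq_zero.mp htk' with h | h
      · exact sub_eq_zero.mp (pow_eq_zero_iff two_ne_zero |>.mp h)
      · exact absurd h (ne_of_gt hfac)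
    · intro hC
      have hz : ∀ k ∈ Finset.univ, t k = 0 := by
        intro k _
        show (z k u - z k v) ^ 2 * (lm2⁻¹ * lm2⁻¹ - (lam k)⁻¹ * (lam k)⁻¹) = 0
        rcases lt_or_ge lm2 (lam k) with h | h
        · rw [hC k h]; simp
        · by_cases hk : k = i0
          · rw [hk, hz0]; simp
          · have : lam k = lm2 := le_antisymm h (hge k hk)
            rw [this]; ring
      have : ∑ k, t k = 0 := Finset.sum_eq_zero hz
      rw [this] at hδ
      linarith
  -- translate the sqrt equation
  have hQnn : 0 ≤ ∑ k, ((lam k)⁻¹ * (lam k)⁻¹) * (z k u - z k v) ^ 2 :=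
    Finset.sum_nonneg fun k _ => mul_nonneg (mul_nonneg (hinv k).1 (hinv k).1) (sq_nonneg _)
  have hrhs : Real.sqrt 2 / lm2 = Real.sqrt (2 / lm2 ^ 2) := by
    rw [Real.sqrt_div (by norm_num : (0:ℝ) ≤ 2), Real.sqrt_sq h2pos'.le]
  have hmain : (Real.sqrt ((Lp * Lp) u u + (Lp * Lp) v v - 2 * (Lp * Lp) u v)
      = Real.sqrt 2 / lm2) ↔ (∀ k : Fin n, lm2 < lam k → z k u = z k v) := by
    rw [hQ, hrhs, Real.sqrt_inj hQnn (div_nonneg (by norm_num) (sq_nonneg _))]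
    exact hQC
  -- the eigenvector condition in full generality
  have hC_of_C' : (∀ k : Fin n, lm2 < lam k → z k u = z k v) →
      ∀ (μ : ℝ) (x : V → ℝ), x ≠ 0 → G.lapMatrix ℝ *ᵥ x = μ • x → lm2 < μ → x u = x v := by
    intro hC μ x hx0 hxe hμ
    set a : Fin n → ℝ := fun k => ∑ w, x w * z k w with ha
    have hrep : ∀ w, x w = ∑ k, a k * z k w := by
      intro w
      symm
      calc ∑ k, a k * z k w = ∑ k, ∑ w', (x w' * z k w') * z k w := by
            simp only [ha, Finset.sum_mul]
        _ = ∑ w', ∑ k, (x w' * z k w') * z k w := Finset.sum_comm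
        _ = ∑ w', x w' * ∑ k, z k w' * z k w := by
            refine Finset.sum_congr rfl fun w' _ => ?_
            rw [Finset.mul_sum]
            exact Finset.sum_congr rfl fun k _ => by ring
        _ = ∑ w', x w' * (if w' = w then 1 else 0) := by
            refine Finset.sum_congr rfl fun w' _ => by rw [hcomp]
        _ = x w := by simp
    have heq : ∀ k, (lam k - μ) * a k = 0 := by
      intro k
      have h1 : ∑ w, x w * (G.lapMatrix ℝ *ᵥ z k) w = lam k * a k := by
        rw [heig k, Finset.mul_sum]
        exact Finset.sum_congr rfl fun w _ => by simp only [Pi.smul_apply, smul_eq_mul]; ring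
      have hsym : ∀ a b : V, G.lapMatrix ℝ a b = G.lapMatrix ℝ b a := by
        intro a b
        conv_lhs => rw [← G.isSymm_lapMatrix (R := ℝ)]
        rfl
      have h2 : ∑ w, x w * (G.lapMatrix ℝ *ᵥ z k) w = μ * a k := by
        calc ∑ w, x w * (G.lapMatrix ℝ *ᵥ z k) w
            = ∑ w, ∑ w', x w * (G.lapMatrix ℝ w w' * z k w') := by
              refine Finset.sum_congr rfl fun w _ => ?_
              rw [Matrix.mulVec, dotProduct, Finset.mul_sum]
          _ = ∑ w', ∑ w, x w * (G.lapMatrix ℝ w w' * z k w') := Finset.sum_comm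
          _ = ∑ w', z k w' * ∑ w, G.lapMatrix ℝ w' w * x w := by
              refine Finset.sum_congr rfl fun w' _ => ?_
              rw [Finset.mul_sum]
              refine Finset.sum_congr rfl fun w _ => ?_
              rw [hsym w w']
              ring
          _ = ∑ w', z k w' * (G.lapMatrix ℝ *ᵥ x) w' := by
              refine Finset.sum_congr rfl fun w' _ => ?_
              rw [Matrix.mulVec, dotProduct]
          _ = μ * a k := by
              rw [hxe, Finset.mul_sum]
              exact Finset.sum_congr rfl fun w _ => by
                simp only [Pi.smul_apply, smul_eq_mul]; ring
      have h12 : lam k * a k = μ * a k := h1.symm.trans h2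
      rw [sub_mul, h12, sub_self]
    have hxuv : x u - x v = 0 := by
      rw [hrep u, hrep v, ← Finset.sum_sub_distrib]
      refine Finset.sum_eq_zero fun k _ => ?_
      rcases eq_or_ne (a k) 0 with h | h
      · rw [h, zero_mul, zero_mul, sub_self]
      · have hlk : lam k = μ := by
          rcases mul_eq_zero.mp (heq k) with h' | h'
          · linarith [sub_eq_zero.mp h']
          · exact absurd h' h
        have hzz : z k u = z k v := hC k (by rw [hlk]; exact hμ)
        rw [hzz, sub_self]
    exact sub_eq_zero.mp hxuv
  have hC'_of_C : (∀ (μ : ℝ) (x : V → ℝ), x ≠ 0 → G.lapMatrix ℝ *ᵥ x = μ • x →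
      lm2 < μ → x u = x v) → ∀ k : Fin n, lm2 < lam k → z k u = z k v :=
    fun hC k hk => hC (lam k) (z k) (hznz k) (heig k) hk
  -- the complete-graph case
  have hC'_of_complete : Nonempty (G ≃g (⊤ : SimpleGraph V)) →
      ∀ k : Fin n, lm2 < lam k → z k u = z k v := by
    rintro ⟨f⟩ k hk
    exfalso
    have hadj : ∀ a b : V, G.Adj a b ↔ a ≠ b := by
      intro a b
      have hmaps := f.map_adj_iff (v := a) (w := b)
      rw [SimpleGraph.top_adj] at hmaps
      rw [← hmaps]
      exact not_congr (EmbeddingLike.apply_eq_iff_eq f)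
    have hLx : ∀ (x : V → ℝ) (w : V), (G.lapMatrix ℝ *ᵥ x) w = n * x w - ∑ w', x w' := by
      intro x w
      rw [SimpleGraph.lapMatrix_mulVec_apply]
      have hnb : G.neighborFinset w = Finset.univ.erase w := by
        ext a
        simp [SimpleGraph.mem_neighborFinset, hadj, ne_comm]
      rw [hnb, Finset.sum_erase_eq_sub (Finset.mem_univ w)]
      have hdeg : (G.degree w : ℝ) = (n : ℝ) - 1 := by
        have hd : G.degree w = n - 1 := by
          rw [← SimpleGraph.card_neighborFinset_eq_degree, hnb,
            Finset.card_erase_of_mem (Finset.mem_univ w), Finset.card_univ, hn]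
        rw [hd, Nat.cast_sub (by omega), Nat.cast_one]
      rw [hdeg]
      ring
    have hsc : ∀ j : Fin n, lam j = 0 ∨ lam j = (n : ℝ) := by
      intro j
      by_cases hj : lam j = (n : ℝ)
      · right; exact hj
      · left
        have hconst : ∀ w w' : V, z j w = z j w' := by
          intro w w'
          have e1 := congrFun (heig j) w
          have e2 := congrFun (heig j) w'
          rw [hLx] at e1 e2
          simp only [Pi.smul_apply, smul_eq_mul] at e1 e2
          have hne : (n : ℝ) - lam j ≠ 0 := sub_ne_zero.mpr fun h => hj (by linarith)
          have hmul : ((n : ℝ) - lam j) * z j w = ((n : ℝ) - lam j) * z j w' := by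
            linear_combination e1 - e2
          exact mul_left_cancel₀ hne hmul
        have hzlap : ∀ w, (G.lapMatrix ℝ *ᵥ z j) w = 0 := by
          intro w
          rw [hLx]
          have hS : ∑ w', z j w' = n * z j w := by
            calc ∑ w', z j w' = ∑ _w' : V, z j w :=
                  Finset.sum_congr rfl fun w' _ => hconst w' w
              _ = (Fintype.card V : ℝ) * z j w := by
                  rw [Finset.sum_const, Finset.card_univ, nsmul_eq_mul]
              _ = n * z j w := by rw [hn]
          rw [hS]
          ring
        obtain ⟨w, hw⟩ : ∃ w, z j w ≠ 0 := by
          by_contra h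
          push_neg at h
          exact hznz j (funext h)
        have hje := congrFun (heig j) w
        rw [hzlap w] at hje
        simp only [Pi.smul_apply, smul_eq_mul] at hje
        rcases mul_eq_zero.mp hje.symm with h | h
        · exact h
        · exact absurd h hw
    have hl2 : lm2 = (n : ℝ) := (hsc i1).resolve_left (ne_of_gt h2pos')
    rcases hsc k with h | h
    · rw [h] at hk; linarith
    · rw [h, ← hl2] at hk; exact lt_irrefl _ hk
  constructor
  · intro h
    exact Or.inr (hC_of_C' (hmain.mp h))
  · rintro (hcompl | hC)
    · exact hmain.mpr (hC'_of_complete hcompl)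
    · exact hmain.mpr (hC'_of_C hC)
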